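/- Let λ_1, λ_2, ... be i.i.d. Exp(1) and let τ be independent geometric with P(τ = i) = p^{i-1} q for i ≥ 2 (i.e., ε_1 = e_1 and the first occurrence of e_2 at time i has probability p^{i-1}q). Then for c = a^{-α} − 1 ≥ 0 and t = r^{-α}, Σ_{i=2}^∞ p^{i-1} q P((λ_2+...+λ_i)/λ_1 > c, λ_1 > t) = (p − pq(1−a^α)/(q + p a^α)) exp(−(p + q a^{-α}) r^{-α}). -/

import Mathlib

open MeasureTheory ProbabilityTheory Real Set
open scoped Nat ENNReal NNReal

noncomputable def epdfR (k : ℕ) (x : ℝ) : ℝ :=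
  if 0 ≤ x then x ^ k * Real.exp (-x) / (k ! : ℝ) else 0

noncomputable def epdf (k : ℕ) (x : ℝ) : ℝ≥0∞ := ENNReal.ofReal (epdfR k x)

noncomputable def gm (k : ℕ) : Measure ℝ := MeasureTheory.volume.withDensity (epdf k)

lemma measurable_epdfR (k : ℕ) : Measurable (epdfR k) := by
  unfold epdfR
  exact Measurable.ite measurableSet_Ici
    (((measurable_id.pow_const _).mul (measurable_id.neg.exp)).div_const _) measurable_const

lemma measurable_epdf (k : ℕ) : Measurable (epdf k) :=
  (measurable_epdfR k).ennreal_ofReal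

lemma epdf_eq_gammaPDF (k : ℕ) : epdf k = gammaPDF (k + 1) 1 := by
  funext x
  unfold epdf epdfR
  rw [gammaPDF_eq]
  congr 1
  split_ifs with h
  · rw [show ((k : ℝ) + 1) - 1 = (k : ℝ) by ring, Real.rpow_natCast, one_rpow,
      Real.Gamma_nat_eq_factorial, one_mul]
    ring
  · rfl

lemma gm_eq_gammaMeasure (k : ℕ) : gm k = gammaMeasure (k + 1) 1 := by
  rw [gm, gammaMeasure, epdf_eq_gammaPDF]

instance gm_prob (k : ℕ) : IsProbabilityMeasure (gm k) := by
  rw [gm_eq_gammaMeasure]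
  exact isProbabilityMeasure_gammaMeasure (by positivity) one_pos

lemma expMeasure_eq_gm : expMeasure 1 = gm 0 := by
  rw [expMeasure, gm_eq_gammaMeasure]
  norm_num

noncomputable def epoly (k : ℕ) (y : ℝ) : ℝ := ∑ j ∈ Finset.range (k + 1), y ^ j / (j ! : ℝ)

lemma epoly_zero (y : ℝ) : epoly 0 y = 1 := by simp [epoly]

lemma epoly_succ (k : ℕ) (y : ℝ) : epoly (k + 1) y = epoly k y + y ^ (k + 1) / ((k + 1)! : ℝ) := by
  rw [epoly, epoly, Finset.sum_range_succ]

lemma epoly_nonneg {y : ℝ} (hy : 0 ≤ y) (k : ℕ) : 0 ≤ epoly k y := by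
  apply Finset.sum_nonneg
  intro j _
  positivity

lemma epoly_le_exp {y : ℝ} (hy : 0 ≤ y) (k : ℕ) : epoly k y ≤ Real.exp y := by
  rw [epoly]; exact Real.sum_le_exp_of_nonneg hy _

lemma epoly_at_zero (k : ℕ) : epoly k 0 = 1 := by
  rw [epoly, Finset.sum_eq_single 0] <;> simp +contextual [Nat.pos_iff_ne_zero]

lemma continuous_epoly (k : ℕ) : Continuous (epoly k) := by
  unfold epoly
  exact continuous_finset_sum _ fun j _ => (continuous_pow j).div_const _

lemma hasDerivAt_exp_epoly (k : ℕ) (x : ℝ) :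
    HasDerivAt (fun x => Real.exp (-x) * epoly k x)
      (-(x ^ k * Real.exp (-x) / (k ! : ℝ))) x := by
  induction k with
  | zero =>
    have h : HasDerivAt (fun x : ℝ => Real.exp (-x)) (-Real.exp (-x)) x := by
      simpa using ((hasDerivAt_id x).neg).exp
    simp only [epoly_zero, mul_one]
    simpa using h
  | succ k ih =>
    have hpow : HasDerivAt (fun x : ℝ => x ^ (k + 1)) ((k + 1 : ℝ) * x ^ k) x := by
      simpa using hasDerivAt_pow (k + 1) x
    have hexp : HasDerivAt (fun x : ℝ => Real.exp (-x)) (-Real.exp (-x)) x := by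
      simpa using ((hasDerivAt_id x).neg).exp
    have hg : HasDerivAt (fun x : ℝ => Real.exp (-x) * (x ^ (k + 1) / ((k + 1)! : ℝ)))
        ((-Real.exp (-x)) * (x ^ (k + 1) / ((k + 1)! : ℝ)) +
          Real.exp (-x) * ((k + 1 : ℝ) * x ^ k / ((k + 1)! : ℝ))) x := by
      exact hexp.mul (hpow.div_const _)
    have := ih.fun_add hg
    have harr : (fun x => Real.exp (-x) * epoly k x +
        Real.exp (-x) * (x ^ (k + 1) / ((k + 1)! : ℝ))) =
        fun x => Real.exp (-x) * epoly (k + 1) x := by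
      funext y; rw [epoly_succ]; ring
    rw [harr] at this
    refine this.congr_deriv ?_
    have hfac : ((k + 1)! : ℝ) = (k + 1 : ℝ) * (k ! : ℝ) := by
      rw [Nat.factorial_succ]; push_cast; ring
    rw [hfac]
    field_simp
    ring

lemma continuous_kexp (k : ℕ) : Continuous (fun x : ℝ => x ^ k * Real.exp (-x) / (k ! : ℝ)) :=
  ((continuous_pow k).mul (continuous_neg.rexp)).div_const _

lemma integral_kexp {y : ℝ} (hy : 0 ≤ y) (k : ℕ) :
    ∫ x in (0)..y, x ^ k * Real.exp (-x) / (k ! : ℝ) = 1 - Real.exp (-y) * epoly k y := by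
  have h := intervalIntegral.integral_eq_sub_of_hasDerivAt
    (f := fun x => -(Real.exp (-x) * epoly k x))
    (f' := fun x => x ^ k * Real.exp (-x) / (k ! : ℝ))
    (fun x _ => by simpa using (hasDerivAt_exp_epoly k x).fun_neg)
    (((continuous_kexp k).intervalIntegrable 0 y))
  rw [h]
  simp only [epoly_at_zero, Real.exp_zero, neg_zero, one_mul]
  ring

lemma integral_pow_fact (y : ℝ) (k : ℕ) :
    ∫ x in (0)..y, x ^ k / (k ! : ℝ) = y ^ (k + 1) / ((k + 1)! : ℝ) := by
  rw [intervalIntegral.integral_div, integral_pow]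
  rw [Nat.factorial_succ]
  push_cast
  field_simp
  simp

lemma gm_Iic (k : ℕ) (y : ℝ) :
    gm k (Iic y) = ENNReal.ofReal (if 0 ≤ y then 1 - Real.exp (-y) * epoly k y else 0) := by
  rw [gm, withDensity_apply _ measurableSet_Iic]
  split_ifs with hy
  · rw [lintegral_Iic_eq_lintegral_Iio_add_Icc _ hy]
    have h1 : ∫⁻ x in Iio (0:ℝ), epdf k x = 0 := by
      rw [setLIntegral_congr_fun (g := fun _ => 0) measurableSet_Iio
        (fun x (hx : x < 0) => by
          simp [epdf, epdfR, not_le.mpr hx])]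
      simp
    have h2 : ∫⁻ x in Icc (0:ℝ) y, epdf k x =
        ENNReal.ofReal (1 - Real.exp (-y) * epoly k y) := by
      have hcong : ∫⁻ x in Icc (0:ℝ) y, epdf k x =
          ∫⁻ x in Icc (0:ℝ) y, ENNReal.ofReal (x ^ k * Real.exp (-x) / (k ! : ℝ)) := by
        refine setLIntegral_congr_fun measurableSet_Icc (fun x hx => ?_)
        simp [epdf, epdfR, hx.1]
      rw [hcong, ← ofReal_integral_eq_lintegral_ofReal]
      · rw [integral_Icc_eq_integral_Ioc, ← intervalIntegral.integral_of_le hy,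
          integral_kexp hy]
      · exact (continuous_kexp k).integrableOn_Icc.integrable
      · exact (ae_restrict_iff' measurableSet_Icc).mpr (ae_of_all _ (fun x hx => by
          have h0 : (0:ℝ) ≤ x := hx.1
          positivity))
    rw [h1, h2, zero_add]
  · rw [setLIntegral_congr_fun (g := fun _ => 0) measurableSet_Iic
      (fun x (hx : x ≤ y) => by
        simp [epdf, epdfR, not_le.mpr (lt_of_le_of_lt hx (not_le.mp hy))])]
    simp

lemma gm_Ioi {k : ℕ} {y : ℝ} (hy : 0 ≤ y) :
    gm k (Ioi y) = ENNReal.ofReal (Real.exp (-y) * epoly k y) := by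
  have h1 : Ioi y = (Iic y)ᶜ := by simp
  rw [h1, prob_compl_eq_one_sub measurableSet_Iic, gm_Iic, if_pos hy]
  have hT0 : 0 ≤ Real.exp (-y) * epoly k y := by
    have := epoly_nonneg hy k; positivity
  have hT1 : Real.exp (-y) * epoly k y ≤ 1 := by
    calc Real.exp (-y) * epoly k y ≤ Real.exp (-y) * Real.exp y :=
          mul_le_mul_of_nonneg_left (epoly_le_exp hy k) (Real.exp_pos _).le
    _ = 1 := by rw [← Real.exp_add]; simp
  rw [← ENNReal.ofReal_one, ← ENNReal.ofReal_sub _ (by linarith)]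
  norm_num

lemma exp_mul_exp_sub (x y : ℝ) : Real.exp (-x) * Real.exp (-(y - x)) = Real.exp (-y) := by
  rw [← Real.exp_add]; congr 1; ring

lemma integrand_eq (k : ℕ) {y : ℝ} (x : ℝ) :
    x ^ k * Real.exp (-x) / (k ! : ℝ) * (1 - Real.exp (-(y - x))) =
      x ^ k * Real.exp (-x) / (k ! : ℝ) - Real.exp (-y) * (x ^ k / (k ! : ℝ)) := by
  have he := exp_mul_exp_sub x y
  rw [mul_sub, mul_one]
  congr 1
  rw [div_mul_eq_mul_div, mul_assoc, he]
  ring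

lemma map_add_gm {Ω : Type*} [MeasurableSpace Ω] (P : Measure Ω) [IsProbabilityMeasure P]
    (X Y : Ω → ℝ) (hX : Measurable X) (hY : Measurable Y) (hind : IndepFun X Y P)
    (k : ℕ) (hmX : P.map X = gm k) (hmY : P.map Y = gm 0) :
    P.map (fun ω => X ω + Y ω) = gm (k + 1) := by
  have hpair : P.map (fun ω => (X ω, Y ω)) = (gm k).prod (gm 0) := by
    rw [← hmX, ← hmY]
    exact (indepFun_iff_map_prod_eq_prod_map_map hX.aemeasurable hY.aemeasurable).mp hind
  have hmap : P.map (fun ω => X ω + Y ω) =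
      Measure.map (fun p : ℝ × ℝ => p.1 + p.2) ((gm k).prod (gm 0)) := by
    rw [← hpair, Measure.map_map measurable_add (hX.prodMk hY)]
    rfl
  have : IsProbabilityMeasure (P.map (fun ω => X ω + Y ω)) :=
    Measure.isProbabilityMeasure_map ((hX.add hY).aemeasurable)
  refine Measure.ext_of_Iic _ _ (fun y => ?_)
  rw [hmap, Measure.map_apply measurable_add measurableSet_Iic,
    Measure.prod_apply (measurable_add measurableSet_Iic)]
  have hsec : ∀ x : ℝ, (Prod.mk x ⁻¹' ((fun p : ℝ × ℝ => p.1 + p.2) ⁻¹' Iic y)) =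
      Iic (y - x) := by
    intro x
    ext v
    simp only [mem_preimage, mem_Iic]
    constructor <;> intro h <;> linarith
  have hint : ∫⁻ x, gm 0 (Prod.mk x ⁻¹' ((fun p : ℝ × ℝ => p.1 + p.2) ⁻¹' Iic y)) ∂(gm k) =
      ∫⁻ x, ENNReal.ofReal (if 0 ≤ y - x then 1 - Real.exp (-(y - x)) else 0) ∂(gm k) := by
    refine lintegral_congr (fun x => ?_)
    rw [hsec x, gm_Iic 0 (y - x)]
    congr 1
    split_ifs with h
    · rw [epoly_zero, mul_one]
    · rfl
  rw [hint]
  have hmeasg : Measurable (fun x : ℝ =>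
      ENNReal.ofReal (if 0 ≤ y - x then 1 - Real.exp (-(y - x)) else 0)) := by
    refine Measurable.ennreal_ofReal (Measurable.ite ?_ ?_ measurable_const)
    · exact measurableSet_le measurable_const (measurable_const.sub measurable_id)
    · exact measurable_const.sub ((measurable_const.sub measurable_id).neg.exp)
  rw [gm, lintegral_withDensity_eq_lintegral_mul _ (measurable_epdf k) hmeasg]
  by_cases hy : 0 ≤ y
  · have hindic : (fun x => (epdf k * fun x : ℝ =>
        ENNReal.ofReal (if 0 ≤ y - x then 1 - Real.exp (-(y - x)) else 0)) x) =
        Set.indicator (Icc 0 y) (fun x =>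
          ENNReal.ofReal (x ^ k * Real.exp (-x) / (k ! : ℝ) * (1 - Real.exp (-(y - x))))) := by
      funext x
      simp only [Pi.mul_apply]
      rcases lt_or_ge x 0 with hx | hx
      · rw [Set.indicator_of_notMem (fun h => absurd h.1 (not_le.mpr hx))]
        simp [epdf, epdfR, not_le.mpr hx]
      · rcases le_or_gt x y with hxy | hxy
        · rw [Set.indicator_of_mem (Set.mem_Icc.mpr ⟨hx, hxy⟩)]
          rw [if_pos (by linarith)]
          rw [epdf, epdfR, if_pos hx, ← ENNReal.ofReal_mul (by positivity)]
        · rw [Set.indicator_of_notMem (fun h => absurd h.2 (not_le.mpr hxy))]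
          rw [if_neg (by linarith)]
          simp
    rw [hindic, lintegral_indicator measurableSet_Icc]
    have hcont : Continuous (fun x : ℝ =>
        x ^ k * Real.exp (-x) / (k ! : ℝ) * (1 - Real.exp (-(y - x)))) := by
      exact (continuous_kexp k).mul
        (continuous_const.sub ((continuous_const.sub continuous_id).neg.rexp))
    rw [← ofReal_integral_eq_lintegral_ofReal hcont.integrableOn_Icc.integrable
      ((ae_restrict_iff' measurableSet_Icc).mpr (ae_of_all _ (fun x hx => by
        have h0 : (0:ℝ) ≤ x := hx.1
        have h1 : Real.exp (-(y - x)) ≤ 1 := by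
          rw [Real.exp_le_one_iff]; linarith [hx.2]
        have h2 : (0:ℝ) ≤ 1 - Real.exp (-(y - x)) := by linarith
        positivity)))]
    rw [gm_Iic, if_pos hy]
    congr 1
    rw [integral_Icc_eq_integral_Ioc, ← intervalIntegral.integral_of_le hy]
    have hcong : ∫ x in (0)..y,
        x ^ k * Real.exp (-x) / (k ! : ℝ) * (1 - Real.exp (-(y - x))) =
        ∫ x in (0)..y,
          (x ^ k * Real.exp (-x) / (k ! : ℝ) - Real.exp (-y) * (x ^ k / (k ! : ℝ))) := by
      refine intervalIntegral.integral_congr (fun x _ => integrand_eq k x)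
    rw [hcong, intervalIntegral.integral_sub ((continuous_kexp k).intervalIntegrable 0 y)
      ((continuous_const.fun_mul ((continuous_pow k).div_const _)).intervalIntegrable 0 y),
      intervalIntegral.integral_const_mul, integral_kexp hy, integral_pow_fact,
      epoly_succ]
    ring
  · rw [gm_Iic, if_neg hy, ENNReal.ofReal_zero]
    rw [← lintegral_zero (μ := (volume : Measure ℝ))]
    refine lintegral_congr (fun x => ?_)
    simp only [Pi.mul_apply]
    rcases lt_or_ge x 0 with hx | hx
    · simp [epdf, epdfR, not_le.mpr hx]
    · rw [if_neg (by intro h; exact hy (by linarith)), ENNReal.ofReal_zero, mul_zero]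

lemma map_sum_gm {Ω : Type*} [MeasurableSpace Ω] (P : Measure Ω) [IsProbabilityMeasure P]
    (lam : ℕ → Ω → ℝ) (hlam_meas : ∀ k, Measurable (lam k))
    (hlam_indep : iIndepFun lam P)
    (hlam_exp : ∀ k, Measure.map (lam k) P = expMeasure 1) (n : ℕ) :
    P.map (fun ω => ∑ j ∈ Finset.Icc 2 (n + 2), lam j ω) = gm n := by
  induction n with
  | zero =>
    have h : (fun ω => ∑ j ∈ Finset.Icc 2 (0 + 2), lam j ω) = lam 2 := by
      funext ω
      rw [show (0:ℕ) + 2 = 2 from rfl, Finset.Icc_self, Finset.sum_singleton]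
    rw [h, hlam_exp 2, expMeasure_eq_gm]
  | succ n ih =>
    have hsum : (fun ω => ∑ j ∈ Finset.Icc 2 (n + 1 + 2), lam j ω) =
        fun ω => (∑ j ∈ Finset.Icc 2 (n + 2), lam j ω) + lam (n + 3) ω := by
      funext ω
      rw [show n + 1 + 2 = (n + 2) + 1 by ring, Finset.sum_Icc_succ_top (by omega)]
    rw [hsum]
    have hfun : (∑ j ∈ Finset.Icc 2 (n + 2), lam j) =
        (fun ω => ∑ j ∈ Finset.Icc 2 (n + 2), lam j ω) := by
      funext ω; simp
    have hIF := hlam_indep.indepFun_finset_sum_of_notMem hlam_meas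
      (s := Finset.Icc 2 (n + 2)) (i := n + 3) (by simp only [Finset.mem_Icc]; omega)
    rw [hfun] at hIF
    exact map_add_gm P _ _ (Finset.measurable_sum _ fun j _ => hlam_meas j) (hlam_meas _)
      hIF n ih (by rw [hlam_exp, expMeasure_eq_gm])

lemma joint_prob {Ω : Type*} [MeasurableSpace Ω] (P : Measure Ω) [IsProbabilityMeasure P]
    (lam : ℕ → Ω → ℝ) (hlam_meas : ∀ k, Measurable (lam k))
    (hlam_indep : iIndepFun lam P)
    (hlam_exp : ∀ k, Measure.map (lam k) P = expMeasure 1)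
    {c t : ℝ} (hc : 0 ≤ c) (ht : 0 < t) (n : ℕ) :
    P {ω | (∑ j ∈ Finset.Icc 2 (n + 2), lam j ω) / lam 1 ω > c ∧ lam 1 ω > t} =
      ∫⁻ x in Ioi t, epdf 0 x *
        ENNReal.ofReal (Real.exp (-(c * x)) * epoly n (c * x)) := by
  set S : Ω → ℝ := fun ω => ∑ j ∈ Finset.Icc 2 (n + 2), lam j ω with hS
  have hSm : Measurable S := Finset.measurable_sum _ fun j _ => hlam_meas j
  have hset : {ω | S ω / lam 1 ω > c ∧ lam 1 ω > t} =
      (fun ω => (lam 1 ω, S ω)) ⁻¹' {pp : ℝ × ℝ | c * pp.1 < pp.2 ∧ t < pp.1} := by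
    ext ω
    simp only [mem_setOf_eq, mem_preimage, gt_iff_lt]
    constructor
    · rintro ⟨h1, h2⟩
      exact ⟨by
        have hpos : 0 < lam 1 ω := lt_trans ht h2
        calc c * lam 1 ω < S ω / lam 1 ω * lam 1 ω := by
              exact mul_lt_mul_of_pos_right h1 hpos
        _ = S ω := by field_simp, h2⟩
    · rintro ⟨h1, h2⟩
      have hpos : 0 < lam 1 ω := lt_trans ht h2
      refine ⟨?_, h2⟩
      rw [lt_div_iff₀ hpos]
      calc c * lam 1 ω < S ω := h1
      _ = _ := by ring_nf
  have hB : MeasurableSet {pp : ℝ × ℝ | c * pp.1 < pp.2 ∧ t < pp.1} := by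
    have : {pp : ℝ × ℝ | c * pp.1 < pp.2 ∧ t < pp.1} =
        {pp : ℝ × ℝ | c * pp.1 < pp.2} ∩ {pp : ℝ × ℝ | t < pp.1} := rfl
    rw [this]
    exact (measurableSet_lt (measurable_fst.const_mul c) measurable_snd).inter
      (measurableSet_lt measurable_const measurable_fst)
  have hind : IndepFun (lam 1) S P := by
    have hfun : (∑ j ∈ Finset.Icc 2 (n + 2), lam j) =
        (fun ω => ∑ j ∈ Finset.Icc 2 (n + 2), lam j ω) := by
      funext ω; simp
    have hIF := hlam_indep.indepFun_finset_sum_of_notMem hlam_meas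
      (s := Finset.Icc 2 (n + 2)) (i := 1) (by simp only [Finset.mem_Icc]; omega)
    rw [hfun] at hIF
    exact hIF.symm
  have hpair : P.map (fun ω => (lam 1 ω, S ω)) = (expMeasure 1).prod (gm n) := by
    rw [← hlam_exp 1, ← map_sum_gm P lam hlam_meas hlam_indep hlam_exp n]
    exact (indepFun_iff_map_prod_eq_prod_map_map (hlam_meas 1).aemeasurable
      hSm.aemeasurable).mp hind
  rw [hset, ← Measure.map_apply ((hlam_meas 1).prodMk hSm) hB, hpair,
    Measure.prod_apply hB]
  have hintg : (fun x => gm n (Prod.mk x ⁻¹' {pp : ℝ × ℝ | c * pp.1 < pp.2 ∧ t < pp.1})) =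
      Set.indicator (Ioi t) (fun x => gm n (Ioi (c * x))) := by
    funext x
    rcases lt_or_ge t x with hx | hx
    · rw [Set.indicator_of_mem (show x ∈ Ioi t from hx)]
      congr 1
      ext s
      simp only [mem_preimage, mem_setOf_eq, mem_Ioi]
      exact ⟨fun h => h.1, fun h => ⟨h, hx⟩⟩
    · rw [Set.indicator_of_notMem (show x ∉ Ioi t from not_lt.mpr hx)]
      have : (Prod.mk x ⁻¹' {pp : ℝ × ℝ | c * pp.1 < pp.2 ∧ t < pp.1}) = ∅ := by
        ext s
        simp only [mem_preimage, mem_setOf_eq, mem_empty_iff_false, iff_false]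
        rintro ⟨-, h2⟩
        exact absurd h2 (not_lt.mpr hx)
      rw [this]
      simp
  rw [hintg, lintegral_indicator measurableSet_Ioi]
  have hcong : ∫⁻ x in Ioi t, gm n (Ioi (c * x)) ∂(expMeasure 1) =
      ∫⁻ x in Ioi t, ENNReal.ofReal (Real.exp (-(c * x)) * epoly n (c * x))
        ∂(expMeasure 1) := by
    refine setLIntegral_congr_fun measurableSet_Ioi (fun x hx => ?_)
    have hx' : (0:ℝ) < x := lt_trans ht hx
    exact gm_Ioi (by positivity)
  rw [hcong, expMeasure_eq_gm, gm, restrict_withDensity measurableSet_Ioi,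
    lintegral_withDensity_eq_lintegral_mul _ (measurable_epdf 0) ?_]
  · rfl
  · refine Measurable.ennreal_ofReal (Measurable.mul ?_ ?_)
    · exact ((measurable_id.const_mul c).neg).exp
    · exact (continuous_epoly n).measurable.comp (measurable_id.const_mul c)

lemma exp_tsum_pow_div (x : ℝ) : ∑' n : ℕ, x ^ n / (n ! : ℝ) = Real.exp x := by
  rw [Real.exp_eq_exp_ℝ, NormedSpace.exp_eq_tsum_div]

lemma summable_epoly {p q : ℝ} (hp : 0 < p) (hp1 : p < 1) (hq : 0 ≤ q) {z : ℝ} (hz : 0 ≤ z) :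
    Summable (fun n : ℕ => p ^ n * q * epoly n z) := by
  refine Summable.of_nonneg_of_le (fun n => ?_) (fun n => ?_)
    (((summable_geometric_of_lt_one hp.le hp1).mul_right q).mul_right (Real.exp z))
  · have := epoly_nonneg hz n; positivity
  · have h1 : epoly n z ≤ Real.exp z := epoly_le_exp hz n
    have h2 : 0 ≤ p ^ n * q := by positivity
    calc p ^ n * q * epoly n z ≤ p ^ n * q * Real.exp z :=
          mul_le_mul_of_nonneg_left h1 h2
    _ = _ := rfl

lemma real_series_eval {p q : ℝ} (hp : 0 < p) (hq : 0 < q) (hpq : p + q = 1)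
    {z : ℝ} (hz : 0 ≤ z) :
    ∑' n : ℕ, p ^ n * q * epoly n z = Real.exp (p * z) := by
  have hp1 : p < 1 := by linarith
  have hFn : Summable (fun j : ℕ => ‖(p * z) ^ j / (j ! : ℝ)‖) := by
    simpa only [Real.norm_eq_abs] using (Real.summable_pow_div_factorial (p * z)).abs
  have hGn : Summable (fun m : ℕ => ‖p ^ m * q‖) := by
    have : Summable (fun m : ℕ => p ^ m * q) :=
      (summable_geometric_of_lt_one hp.le hp1).mul_right q
    refine this.congr (fun m => ?_)
    rw [Real.norm_eq_abs, abs_of_nonneg (by positivity)]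
  have hcauchy := tsum_mul_tsum_eq_tsum_sum_range_of_summable_norm hFn hGn
  have hterm : ∀ n : ℕ, ∑ k ∈ Finset.range (n + 1),
      (p * z) ^ k / (k ! : ℝ) * (p ^ (n - k) * q) = p ^ n * q * epoly n z := by
    intro n
    rw [epoly, Finset.mul_sum]
    refine Finset.sum_congr rfl (fun k hk => ?_)
    have hkn : k ≤ n := Nat.lt_succ_iff.mp (Finset.mem_range.mp hk)
    have hpk : p ^ k * p ^ (n - k) = p ^ n := by
      rw [← pow_add, Nat.add_sub_cancel' hkn]
    calc (p * z) ^ k / (k ! : ℝ) * (p ^ (n - k) * q)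
        = (p ^ k * p ^ (n - k)) * q * (z ^ k / (k ! : ℝ)) := by
          rw [mul_pow]; ring
    _ = p ^ n * q * (z ^ k / (k ! : ℝ)) := by rw [hpk]
  have hF : ∑' j : ℕ, (p * z) ^ j / (j ! : ℝ) = Real.exp (p * z) := exp_tsum_pow_div _
  have hG : ∑' m : ℕ, p ^ m * q = 1 := by
    rw [tsum_mul_right, tsum_geometric_of_lt_one hp.le hp1,
      show (1:ℝ) - p = q by linarith, inv_mul_cancel₀ hq.ne']
  calc ∑' n : ℕ, p ^ n * q * epoly n z
      = ∑' n : ℕ, ∑ k ∈ Finset.range (n + 1),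
          (p * z) ^ k / (k ! : ℝ) * (p ^ (n - k) * q) := by
        exact tsum_congr (fun n => (hterm n).symm)
  _ = (∑' j : ℕ, (p * z) ^ j / (j ! : ℝ)) * ∑' m : ℕ, p ^ m * q := hcauchy.symm
  _ = Real.exp (p * z) := by rw [hF, hG, mul_one]

lemma series_eval {p q : ℝ} (hp : 0 < p) (hq : 0 < q) (hpq : p + q = 1) {z : ℝ} (hz : 0 ≤ z) :
    ∑' n : ℕ, ENNReal.ofReal (p ^ (n + 1) * q * (Real.exp (-z) * epoly n z)) =
      ENNReal.ofReal (p * Real.exp (-(q * z))) := by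
  have hp1 : p < 1 := by linarith
  have hre : ∀ n : ℕ, p ^ (n + 1) * q * (Real.exp (-z) * epoly n z) =
      (p * Real.exp (-z)) * (p ^ n * q * epoly n z) := by
    intro n; rw [pow_succ]; ring
  have hsummable : Summable (fun n : ℕ => (p * Real.exp (-z)) * (p ^ n * q * epoly n z)) :=
    (summable_epoly hp hp1 hq.le hz).mul_left _
  have hval : ∑' n : ℕ, (p * Real.exp (-z)) * (p ^ n * q * epoly n z) =
      p * Real.exp (-(q * z)) := by
    rw [tsum_mul_left, real_series_eval hp hq hpq hz, mul_assoc, ← Real.exp_add]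
    congr 2
    linear_combination z * hpq
  calc ∑' n : ℕ, ENNReal.ofReal (p ^ (n + 1) * q * (Real.exp (-z) * epoly n z))
      = ∑' n : ℕ, ENNReal.ofReal ((p * Real.exp (-z)) * (p ^ n * q * epoly n z)) := by
        exact tsum_congr (fun n => by rw [hre n])
  _ = ENNReal.ofReal (∑' n : ℕ, (p * Real.exp (-z)) * (p ^ n * q * epoly n z)) := by
        refine (ENNReal.ofReal_tsum_of_nonneg (fun n => ?_) hsummable).symm
        have := epoly_nonneg hz n; positivity
  _ = ENNReal.ofReal (p * Real.exp (-(q * z))) := by rw [hval]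

open Filter in
lemma lintegral_exp_tail {β pp : ℝ} (t : ℝ) (hβ : 0 < β) (hpp : 0 ≤ pp) :
    ∫⁻ x in Ioi t, ENNReal.ofReal (pp * Real.exp (-(β * x))) =
      ENNReal.ofReal (pp / β * Real.exp (-(β * t))) := by
  have hint : IntegrableOn (fun x => pp * Real.exp (-(β * x))) (Ioi t) := by
    have h := exp_neg_integrableOn_Ioi t hβ
    simp only [neg_mul] at h
    exact h.const_mul pp
  rw [← ofReal_integral_eq_lintegral_ofReal hint (ae_of_all _ fun x => by positivity)]
  congr 1
  have hd : ∀ x ∈ Ioi t, HasDerivAt (fun x => -(pp / β) * Real.exp (-(β * x)))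
      (pp * Real.exp (-(β * x))) x := by
    intro x _
    have h1 : HasDerivAt (fun x : ℝ => -(β * x)) (-β) x := by
      simpa using ((hasDerivAt_id x).const_mul β).fun_neg
    have h3 := h1.exp.const_mul (-(pp / β))
    refine h3.congr_deriv ?_
    field_simp
  have hcont : ContinuousWithinAt (fun x => -(pp / β) * Real.exp (-(β * x))) (Ici t) t :=
    Continuous.continuousWithinAt (by fun_prop)
  have htend : Tendsto (fun x => -(pp / β) * Real.exp (-(β * x))) atTop (nhds 0) := by
    have h1 : Tendsto (fun x : ℝ => -(β * x)) atTop atBot := by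
      exact tendsto_neg_atBot_iff.mpr (Tendsto.const_mul_atTop hβ tendsto_id)
    have h2 := Real.tendsto_exp_atBot.comp h1
    have h3 := h2.const_mul (-(pp / β))
    simpa using h3
  have hval := integral_Ioi_of_hasDerivAt_of_tendsto hcont hd hint htend
  rw [hval]
  ring

/-- Closed-form evaluation of
`∑_{i=2}^∞ p^{i-1} q P((λ₂+⋯+λᵢ)/λ₁ > a^(-α) - 1, λ₁ > r^(-α))` for i.i.d. standard
exponential variables `λ₁, λ₂, …`: the sum equals
`(p - pq(1-a^α)/(q + p a^α)) exp(-(p + q a^(-α)) r^(-α))`. -/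
theorem geometric_exponential_sum_closed_form
    {Ω : Type*} [MeasurableSpace Ω] (P : Measure Ω) [IsProbabilityMeasure P]
    (α : ℝ) (hα : 0 < α) (a p q r : ℝ)
    (ha : 0 < a) (ha1 : a ≤ 1) (hp : 0 < p) (hq : 0 < q) (hpq : p + q = 1)
    (hr : 0 < r)
    (lam : ℕ → Ω → ℝ)
    (hlam_meas : ∀ k, Measurable (lam k))
    (hlam_indep : iIndepFun lam P)
    (hlam_exp : ∀ k, Measure.map (lam k) P = expMeasure 1) :
    ∑' n : ℕ, p ^ (n + 1) * q *
        (P {ω | (∑ j ∈ Finset.Icc 2 (n + 2), lam j ω) / lam 1 ω > a ^ (-α) - 1 ∧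
                lam 1 ω > r ^ (-α)}).toReal =
      (p - p * q * (1 - a ^ α) / (q + p * a ^ α)) *
        Real.exp (-((p + q * a ^ (-α)) * r ^ (-α))) := by
  have hA : 0 < a ^ α := Real.rpow_pos_of_pos ha α
  have hAle : a ^ α ≤ 1 := Real.rpow_le_one ha.le ha1 hα.le
  have hainv : a ^ (-α) = (a ^ α)⁻¹ := Real.rpow_neg ha.le α
  have hA1 : 1 ≤ a ^ (-α) := by
    rw [hainv]
    nlinarith [mul_inv_cancel₀ hA.ne', inv_pos.mpr hA]
  set c : ℝ := a ^ (-α) - 1 with hcdef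
  set t : ℝ := r ^ (-α) with htdef
  have hc : 0 ≤ c := by rw [hcdef]; linarith
  have ht : 0 < t := Real.rpow_pos_of_pos hr _
  have hβ : 0 < 1 + q * c := by nlinarith
  have hPn := fun n => joint_prob P lam hlam_meas hlam_indep hlam_exp hc ht n
  have hmeasfn : ∀ n : ℕ, Measurable (fun x : ℝ =>
      epdf 0 x * ENNReal.ofReal (Real.exp (-(c * x)) * epoly n (c * x))) := fun n =>
    (measurable_epdf 0).mul (Measurable.ennreal_ofReal
      ((((measurable_id.const_mul c).neg).exp).mul
        ((continuous_epoly n).measurable.comp (measurable_id.const_mul c))))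
  -- Step A : convert to an ENNReal computation
  have hstepA : ∑' n : ℕ, p ^ (n + 1) * q *
      (P {ω | (∑ j ∈ Finset.Icc 2 (n + 2), lam j ω) / lam 1 ω > c ∧ lam 1 ω > t}).toReal =
      (∑' n : ℕ, ENNReal.ofReal (p ^ (n + 1) * q) *
        P {ω | (∑ j ∈ Finset.Icc 2 (n + 2), lam j ω) / lam 1 ω > c ∧
            lam 1 ω > t}).toReal := by
    rw [ENNReal.tsum_toReal_eq
      (fun n => ENNReal.mul_ne_top ENNReal.ofReal_ne_top (measure_ne_top P _))]
    refine tsum_congr (fun n => ?_)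
    rw [ENNReal.toReal_mul, ENNReal.toReal_ofReal (by positivity)]
  rw [hstepA]
  -- Step B : evaluate the ENNReal sum
  have hstepB : (∑' n : ℕ, ENNReal.ofReal (p ^ (n + 1) * q) *
      P {ω | (∑ j ∈ Finset.Icc 2 (n + 2), lam j ω) / lam 1 ω > c ∧ lam 1 ω > t}) =
      ENNReal.ofReal (p / (1 + q * c) * Real.exp (-((1 + q * c) * t))) := by
    have h1 : ∀ n : ℕ, ENNReal.ofReal (p ^ (n + 1) * q) *
        P {ω | (∑ j ∈ Finset.Icc 2 (n + 2), lam j ω) / lam 1 ω > c ∧ lam 1 ω > t} =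
        ∫⁻ x in Ioi t, ENNReal.ofReal (p ^ (n + 1) * q) *
          (epdf 0 x * ENNReal.ofReal (Real.exp (-(c * x)) * epoly n (c * x))) := by
      intro n
      rw [hPn n, ← lintegral_const_mul _ (hmeasfn n)]
    calc ∑' n : ℕ, ENNReal.ofReal (p ^ (n + 1) * q) *
        P {ω | (∑ j ∈ Finset.Icc 2 (n + 2), lam j ω) / lam 1 ω > c ∧ lam 1 ω > t}
        = ∑' n : ℕ, ∫⁻ x in Ioi t, ENNReal.ofReal (p ^ (n + 1) * q) *
            (epdf 0 x * ENNReal.ofReal (Real.exp (-(c * x)) * epoly n (c * x))) :=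
          tsum_congr h1
    _ = ∫⁻ x in Ioi t, ∑' n : ℕ, ENNReal.ofReal (p ^ (n + 1) * q) *
          (epdf 0 x * ENNReal.ofReal (Real.exp (-(c * x)) * epoly n (c * x))) :=
        (lintegral_tsum (fun n => (measurable_const.mul (hmeasfn n)).aemeasurable)).symm
    _ = ∫⁻ x in Ioi t, ENNReal.ofReal (p * Real.exp (-((1 + q * c) * x))) := by
        refine setLIntegral_congr_fun measurableSet_Ioi (fun x hx => ?_)
        have hx0 : 0 < x := lt_trans ht hx
        have hzx : 0 ≤ c * x := by positivity
        have hepdf : epdf 0 x = ENNReal.ofReal (Real.exp (-x)) := by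
          simp [epdf, epdfR, hx0.le]
        calc ∑' n : ℕ, ENNReal.ofReal (p ^ (n + 1) * q) *
            (epdf 0 x * ENNReal.ofReal (Real.exp (-(c * x)) * epoly n (c * x)))
            = ∑' n : ℕ, epdf 0 x * (ENNReal.ofReal (p ^ (n + 1) * q) *
                ENNReal.ofReal (Real.exp (-(c * x)) * epoly n (c * x))) :=
              tsum_congr (fun n => by ring)
        _ = epdf 0 x * ∑' n : ℕ, ENNReal.ofReal (p ^ (n + 1) * q) *
              ENNReal.ofReal (Real.exp (-(c * x)) * epoly n (c * x)) :=
            ENNReal.tsum_mul_left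
        _ = epdf 0 x * ∑' n : ℕ,
              ENNReal.ofReal (p ^ (n + 1) * q * (Real.exp (-(c * x)) * epoly n (c * x))) := by
            congr 1
            exact tsum_congr (fun n => (ENNReal.ofReal_mul (by positivity)).symm)
        _ = ENNReal.ofReal (Real.exp (-x)) * ENNReal.ofReal (p * Real.exp (-(q * (c * x)))) := by
            rw [series_eval hp hq hpq hzx, hepdf]
        _ = ENNReal.ofReal (p * Real.exp (-((1 + q * c) * x))) := by
            rw [← ENNReal.ofReal_mul (Real.exp_pos _).le]
            congr 1
            rw [show -((1 + q * c) * x) = -x + -(q * (c * x)) by ring, Real.exp_add]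
            ring
    _ = ENNReal.ofReal (p / (1 + q * c) * Real.exp (-((1 + q * c) * t))) :=
        lintegral_exp_tail t hβ hp.le
  rw [hstepB, ENNReal.toReal_ofReal (by positivity)]
  -- Step C : algebra
  have hβeq : 1 + q * c = p + q * a ^ (-α) := by
    rw [hcdef]; linarith
  rw [hβeq, htdef]
  congr 1
  rw [hainv]
  have hq1 : q = 1 - p := by linarith
  rw [hq1]
  have hp1 : 0 < 1 - p := by linarith
  have hden1 : p + (1 - p) * (a ^ α)⁻¹ ≠ 0 := by positivity
  have hden2 : (1 - p) + p * a ^ α ≠ 0 := by positivity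
  field_simp
  ring
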